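/- Let n ≥ 1 and consider the phase space ℝⁿ × ℝⁿ with coordinates (q, p), equipped with the canonical Poisson bracket {f, g} = Σᵢ (∂f/∂qᵢ · ∂g/∂pᵢ − ∂f/∂pᵢ · ∂g/∂qᵢ). Let F₀, F₁ : ℝⁿ × ℝⁿ → ℝ be differentiable with F₁(q,p) ≠ 0 for all (q,p), and let I : ℝⁿ × ℝⁿ × ℝ → ℝ be differentiable. Assume that for every α ∈ ℝ the function (q,p) ↦ I(q,p,α) Poisson-commutes with F₀ − α·F₁, i.e. {F₀ − α F₁, I(·,·,α)}(q,p) = 0 for all (q,p). Then for every f ∈ ℝ, setting G = (F₀ − f)/F₁ and J(q,p) = I(q,p, G(q,p)), one has {G, J}(q,p) = 0 for all (q,p). -/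

import Mathlib

open scoped BigOperators

/-- The canonical Poisson bracket of two functions on `ℝⁿ × ℝⁿ` with
coordinates `(q, p)`:
`{f, g} = ∑ i, (∂f/∂qᵢ · ∂g/∂pᵢ − ∂f/∂pᵢ · ∂g/∂qᵢ)`. -/
noncomputable def poissonBracket (n : ℕ)
    (f g : (Fin n → ℝ) × (Fin n → ℝ) → ℝ)
    (x : (Fin n → ℝ) × (Fin n → ℝ)) : ℝ :=
  ∑ i : Fin n,
    (fderiv ℝ f x (Pi.single i 1, 0) * fderiv ℝ g x (0, Pi.single i 1)
      - fderiv ℝ f x (0, Pi.single i 1) * fderiv ℝ g x (Pi.single i 1, 0))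

/-- Coupling constant metamorphosis (Lemma 2 of the paper). -/
theorem coupling_constant_metamorphosis (n : ℕ) (hn : 1 ≤ n)
    (F₀ F₁ : (Fin n → ℝ) × (Fin n → ℝ) → ℝ)
    (I : ((Fin n → ℝ) × (Fin n → ℝ)) × ℝ → ℝ)
    (hF₀ : Differentiable ℝ F₀) (hF₁ : Differentiable ℝ F₁)
    (hF₁ne : ∀ x, F₁ x ≠ 0)
    (hI : Differentiable ℝ I)
    (hcomm : ∀ α : ℝ, ∀ x,
      poissonBracket n (fun y => F₀ y - α * F₁ y) (fun y => I (y, α)) x = 0)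
    (f : ℝ) :
    ∀ x, poissonBracket n (fun y => (F₀ y - f) / F₁ y)
        (fun y => I (y, (F₀ y - f) / F₁ y)) x = 0 := by
  intro x
  classical
  set α : ℝ := (F₀ x - f) / F₁ x with hα
  -- derivative of the inverse of F₁
  have hInv : HasFDerivAt (fun y => (F₁ y)⁻¹)
      ((-(F₁ x ^ 2)⁻¹) • fderiv ℝ F₁ x) x :=
    (hasDerivAt_inv (hF₁ne x)).comp_hasFDerivAt x (hF₁ x).hasFDerivAt
  -- derivative of G = (F₀ - f)/F₁, written as a product with the inverse
  have hGd : HasFDerivAt (fun y => (F₀ y - f) * (F₁ y)⁻¹)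
      ((F₀ x - f) • ((-(F₁ x ^ 2)⁻¹) • fderiv ℝ F₁ x)
        + (F₁ x)⁻¹ • fderiv ℝ F₀ x) x :=
    ((hF₀ x).hasFDerivAt.sub_const f).mul hInv
  have hfun : (fun y => (F₀ y - f) / F₁ y) = fun y => (F₀ y - f) * (F₁ y)⁻¹ := by
    funext y; rw [div_eq_mul_inv]
  have hGd' : HasFDerivAt (fun y => (F₀ y - f) / F₁ y)
      ((F₀ x - f) • ((-(F₁ x ^ 2)⁻¹) • fderiv ℝ F₁ x)
        + (F₁ x)⁻¹ • fderiv ℝ F₀ x) x := by rw [hfun]; exact hGd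
  have hGv : ∀ v, fderiv ℝ (fun y => (F₀ y - f) / F₁ y) x v
      = (fderiv ℝ F₀ x v - α * fderiv ℝ F₁ x v) / F₁ x := by
    intro v
    rw [hGd'.fderiv]
    simp only [ContinuousLinearMap.add_apply, ContinuousLinearMap.smul_apply,
      smul_eq_mul, hα]
    field_simp [hF₁ne x]
    ring
  -- derivative of J = I(·, G(·))
  have hJd : HasFDerivAt (fun y => I (y, (F₀ y - f) / F₁ y))
      ((fderiv ℝ I (x, α)).comp
        ((ContinuousLinearMap.id ℝ ((Fin n → ℝ) × (Fin n → ℝ))).prod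
          ((F₀ x - f) • ((-(F₁ x ^ 2)⁻¹) • fderiv ℝ F₁ x)
            + (F₁ x)⁻¹ • fderiv ℝ F₀ x))) x := by
    have hpair : HasFDerivAt (fun y => (y, (F₀ y - f) / F₁ y))
        ((ContinuousLinearMap.id ℝ ((Fin n → ℝ) × (Fin n → ℝ))).prod
          ((F₀ x - f) • ((-(F₁ x ^ 2)⁻¹) • fderiv ℝ F₁ x)
            + (F₁ x)⁻¹ • fderiv ℝ F₀ x)) x :=
      HasFDerivAt.prodMk (hasFDerivAt_id x) hGd'
    exact (hI (x, α)).hasFDerivAt.comp x hpair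
  have hJv : ∀ v, fderiv ℝ (fun y => I (y, (F₀ y - f) / F₁ y)) x v
      = fderiv ℝ I (x, α) (v, fderiv ℝ (fun y => (F₀ y - f) / F₁ y) x v) := by
    intro v
    rw [hJd.fderiv]
    simp only [ContinuousLinearMap.comp_apply, ContinuousLinearMap.prod_apply,
      ContinuousLinearMap.id_apply]
    congr 1
    rw [hGd'.fderiv]
  -- derivative of y ↦ I (y, α) for fixed α
  have hIαv : ∀ v, fderiv ℝ (fun y => I (y, α)) x v = fderiv ℝ I (x, α) (v, 0) := by
    intro v
    have hpair : HasFDerivAt (fun y : (Fin n → ℝ) × (Fin n → ℝ) => (y, α))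
        ((ContinuousLinearMap.id ℝ ((Fin n → ℝ) × (Fin n → ℝ))).prod 0) x :=
      HasFDerivAt.prodMk (hasFDerivAt_id x) (hasFDerivAt_const α x)
    have h : HasFDerivAt (fun y => I (y, α))
        ((fderiv ℝ I (x, α)).comp
          ((ContinuousLinearMap.id ℝ ((Fin n → ℝ) × (Fin n → ℝ))).prod 0)) x :=
      (hI (x, α)).hasFDerivAt.comp x hpair
    rw [h.fderiv]
    simp
  -- derivative of y ↦ F₀ y - α * F₁ y
  have hHv : ∀ v, fderiv ℝ (fun y => F₀ y - α * F₁ y) x v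
      = fderiv ℝ F₀ x v - α * fderiv ℝ F₁ x v := by
    intro v
    have h : HasFDerivAt (fun y => F₀ y - α * F₁ y)
        (fderiv ℝ F₀ x - α • fderiv ℝ F₁ x) x :=
      (hF₀ x).hasFDerivAt.sub ((hF₁ x).hasFDerivAt.const_mul α)
    rw [h.fderiv]
    simp [smul_eq_mul]
  -- linearity of the derivative of I in the last variable
  have hlin : ∀ (v : (Fin n → ℝ) × (Fin n → ℝ)) (t : ℝ),
      fderiv ℝ I (x, α) (v, t)
        = fderiv ℝ I (x, α) (v, 0) + t * fderiv ℝ I (x, α) (0, 1) := by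
    intro v t
    have hvt : ((v, t) : ((Fin n → ℝ) × (Fin n → ℝ)) × ℝ)
        = (v, 0) + t • ((0 : (Fin n → ℝ) × (Fin n → ℝ)), (1 : ℝ)) := by
      simp [Prod.ext_iff]
    rw [hvt, map_add, map_smul, smul_eq_mul]
  have hJv' : ∀ v, fderiv ℝ (fun y => I (y, (F₀ y - f) / F₁ y)) x v
      = fderiv ℝ I (x, α) (v, 0)
        + ((fderiv ℝ F₀ x v - α * fderiv ℝ F₁ x v) / F₁ x)
          * fderiv ℝ I (x, α) (0, 1) := by
    intro v
    rw [hJv v, hGv v, hlin]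
  have key := hcomm α x
  unfold poissonBracket at key ⊢
  simp only [hHv, hIαv] at key
  have expand : ∀ i : Fin n,
      fderiv ℝ (fun y => (F₀ y - f) / F₁ y) x ((Pi.single i 1 : Fin n → ℝ), (0 : Fin n → ℝ))
          * fderiv ℝ (fun y => I (y, (F₀ y - f) / F₁ y)) x ((0 : Fin n → ℝ), (Pi.single i 1 : Fin n → ℝ))
        - fderiv ℝ (fun y => (F₀ y - f) / F₁ y) x ((0 : Fin n → ℝ), (Pi.single i 1 : Fin n → ℝ))
          * fderiv ℝ (fun y => I (y, (F₀ y - f) / F₁ y)) x ((Pi.single i 1 : Fin n → ℝ), (0 : Fin n → ℝ))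
      = (F₁ x)⁻¹ *
        ((fderiv ℝ F₀ x ((Pi.single i 1 : Fin n → ℝ), (0 : Fin n → ℝ))
            - α * fderiv ℝ F₁ x ((Pi.single i 1 : Fin n → ℝ), (0 : Fin n → ℝ)))
            * fderiv ℝ I (x, α) (((0 : Fin n → ℝ), (Pi.single i 1 : Fin n → ℝ)), 0)
          - (fderiv ℝ F₀ x ((0 : Fin n → ℝ), (Pi.single i 1 : Fin n → ℝ))
            - α * fderiv ℝ F₁ x ((0 : Fin n → ℝ), (Pi.single i 1 : Fin n → ℝ)))
            * fderiv ℝ I (x, α) (((Pi.single i 1 : Fin n → ℝ), (0 : Fin n → ℝ)), 0)) := by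
    intro i
    rw [hGv, hGv, hJv', hJv']
    field_simp
    ring
  rw [Finset.sum_congr rfl (fun i _ => expand i), ← Finset.mul_sum, key, mul_zero]
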